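/- Let $(X,\omega)$ be a pre-$n$-plectic manifold, and let $v_1, \ldots, v_{k+1}$ be Hamiltonian vector fields for $\omega$ with $k \geq 1$. Then $d\,\iota_{v_1 \wedge \cdots \wedge v_k}\omega = \sum_{i<j} (-1)^{i+j+k}\, \iota_{[v_i,v_j] \wedge v_1 \wedge \cdots \wedge \hat v_i \wedge \cdots \wedge \hat v_j \wedge \cdots \wedge v_k}\omega$. -/

import Mathlib

/-- An abstract (ungraded) Cartan calculus: a Lie algebra `V` of vector fields
acting on a module `Ω` of differential forms by interior products `ι`, together
with the de Rham differential `d`, satisfying the standard Cartan identities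
(`d² = 0`, `ι_v ι_v = 0` and `ι_{[u,v]} = [𝓛_u, ι_v]` with
`𝓛_v = d ∘ ι_v + ι_v ∘ d`). -/
structure CartanModule (V : Type*) [LieRing V] [LieAlgebra ℝ V]
    (Ω : Type*) [AddCommGroup Ω] [Module ℝ Ω] where
  d : Ω →ₗ[ℝ] Ω
  ι : V →ₗ[ℝ] Ω →ₗ[ℝ] Ω
  d_sq : ∀ α : Ω, d (d α) = 0
  ι_ι : ∀ (v : V) (α : Ω), ι v (ι v α) = 0
  cartan_comm : ∀ (u v : V) (α : Ω),
    ι ⁅u, v⁆ α =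
      (d (ι u (ι v α)) + ι u (d (ι v α))) - ι v (d (ι u α) + ι u (d α))

namespace CartanModule

variable {V : Type*} [LieRing V] [LieAlgebra ℝ V]
  {Ω : Type*} [AddCommGroup Ω] [Module ℝ Ω]

/-- The Lie derivative along a vector field, via Cartan's magic formula. -/
def lieD (C : CartanModule V Ω) (v : V) (α : Ω) : Ω :=
  C.d (C.ι v α) + C.ι v (C.d α)

/-- Iterated interior product with a decomposable multivector field
`v₁ ∧ ⋯ ∧ v_k` (encoded as the list `[v₁, …, v_k]`):
`ι_{v₁ ∧ ⋯ ∧ v_k} = ι_{v_k} ∘ ⋯ ∘ ι_{v₁}`. -/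
def ιList (C : CartanModule V Ω) : List V → Ω → Ω
  | [], α => α
  | v :: l, α => C.ιList l (C.ι v α)

end CartanModule

/-!
Peel off the last vector field `w` of the list: `d ι_w β = 𝓛_w β - ι_w dβ`.
Since `𝓛_w` commutes with `ι` up to `ι_{[w, ·]}`, and `𝓛_w ω = 0` because `w` is
Hamiltonian and `ω` closed, `𝓛_w ι_{v₁∧⋯∧v_k} ω` is the alternating sum of the
contractions in which one `v_i` is replaced by `[w, v_i]`; these are exactly the new
pairs `(i, k + 1)` of the formula, while `- ι_w d ι_{v₁∧⋯∧v_k} ω` supplies the old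
pairs by induction.
-/

lemma Fin.sum_sum_ite_lt {M : Type*} [AddCommMonoid M] (n : ℕ) (f : ℕ → ℕ → M) :
    ∑ i : Fin n, ∑ j : Fin n, (if (i : ℕ) < j then f i j else 0)
      = ∑ j ∈ Finset.range n, ∑ i ∈ Finset.range j, f i j := by
  rw [Finset.sum_comm, ← Fin.sum_univ_eq_sum_range (fun j => ∑ i ∈ Finset.range j, f i j)]
  refine Finset.sum_congr rfl fun j _ => ?_
  rw [Fin.sum_univ_eq_sum_range (fun i => if i < (j : ℕ) then f i j else 0), ← Finset.sum_filter]
  congr 1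
  ext i
  simp only [Finset.mem_filter, Finset.mem_range]
  omega

namespace CartanModule

variable {V : Type*} [LieRing V] [LieAlgebra ℝ V]
  {Ω : Type*} [AddCommGroup Ω] [Module ℝ Ω]
  (C : CartanModule V Ω)

lemma ι_ι_anticomm (u v : V) (α : Ω) : C.ι u (C.ι v α) = -C.ι v (C.ι u α) := by
  have h := C.ι_ι (u + v) α
  simp only [map_add, LinearMap.add_apply, C.ι_ι, zero_add, add_zero] at h
  exact eq_neg_of_add_eq_zero_right h

lemma d_ι (v : V) (α : Ω) : C.d (C.ι v α) = C.lieD v α - C.ι v (C.d α) := by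
  rw [lieD, add_sub_cancel_right]

lemma lieD_ι (u v : V) (α : Ω) :
    C.lieD u (C.ι v α) = C.ι v (C.lieD u α) + C.ι ⁅u, v⁆ α := by
  rw [C.cartan_comm, lieD, lieD]
  abel

lemma lieD_eq_zero_of_hamiltonian {v : V} {ω : Ω} (hω : C.d ω = 0)
    (hv : ∃ H : Ω, C.ι v ω + C.d H = 0) : C.lieD v ω = 0 := by
  obtain ⟨H, hH⟩ := hv
  rw [lieD, hω, map_zero, add_zero, eq_neg_of_add_eq_zero_left hH, map_neg, C.d_sq, neg_zero]

lemma ιList_append (l₁ l₂ : List V) (α : Ω) :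
    C.ιList (l₁ ++ l₂) α = C.ιList l₂ (C.ιList l₁ α) := by
  induction l₁ generalizing α with
  | nil => rfl
  | cons v l ih => exact ih (C.ι v α)

lemma ιList_concat (l : List V) (w : V) (α : Ω) :
    C.ιList (l ++ [w]) α = C.ι w (C.ιList l α) :=
  C.ιList_append l [w] α

lemma ιList_zero (l : List V) : C.ιList l (0 : Ω) = 0 := by
  induction l with
  | nil => rfl
  | cons v l ih => simp only [ιList, map_zero, ih]

lemma ιList_add (l : List V) (α β : Ω) :
    C.ιList l (α + β) = C.ιList l α + C.ιList l β := by
  induction l generalizing α β with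
  | nil => rfl
  | cons v l ih => simp only [ιList, map_add, ih]

lemma ιList_neg (l : List V) (α : Ω) : C.ιList l (-α) = -C.ιList l α := by
  induction l generalizing α with
  | nil => rfl
  | cons v l ih => simp only [ιList, map_neg, ih]

lemma lieD_ιList (u : V) (l : List V) (α : Ω) :
    C.lieD u (C.ιList l α) = C.ιList l (C.lieD u α)
      + ∑ i ∈ Finset.range l.length,
          (-1 : ℝ) ^ i • C.ιList (l.eraseIdx i) (C.ι ⁅u, l.getD i 0⁆ α) := by
  induction l generalizing α with
  | nil => simp [ιList]
  | cons v l ih =>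
    have hmove : ∀ i ∈ Finset.range l.length,
        (-1 : ℝ) ^ i • C.ιList (l.eraseIdx i) (C.ι ⁅u, l.getD i 0⁆ (C.ι v α))
          = (-1 : ℝ) ^ (i + 1) • C.ιList (v :: l.eraseIdx i) (C.ι ⁅u, l.getD i 0⁆ α) := by
      intro i _
      rw [C.ι_ι_anticomm, ιList_neg, pow_succ, mul_neg_one, neg_smul, smul_neg]
      rfl
    simp only [ιList, List.length_cons]
    rw [ih, lieD_ι, ιList_add, Finset.sum_congr rfl hmove, Finset.sum_range_succ']
    simp only [List.eraseIdx_cons_succ, List.eraseIdx_cons_zero, List.getD_cons_succ,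
      List.getD_cons_zero, pow_zero, one_smul]
    abel

/-- The right-hand side of the formula, with the pairs `i < j` enumerated by `j` first, so that
appending a vector field to `l` only adds the pairs `(i, l.length)`. -/
def pairSum (l : List V) (ω : Ω) : Ω :=
  ∑ j ∈ Finset.range l.length, ∑ i ∈ Finset.range j,
    (-1 : ℝ) ^ (i + j + l.length) •
      C.ιList (⁅l.getD i 0, l.getD j 0⁆ :: (l.eraseIdx j).eraseIdx i) ω

lemma ιList_bracket_concat_of_lt {l : List V} {i j : ℕ} (hij : i < j) (hj : j < l.length)
    (w : V) (ω : Ω) :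
    C.ιList (⁅(l ++ [w]).getD i 0, (l ++ [w]).getD j 0⁆ ::
        ((l ++ [w]).eraseIdx j).eraseIdx i) ω
      = C.ι w (C.ιList (⁅l.getD i 0, l.getD j 0⁆ :: (l.eraseIdx j).eraseIdx i) ω) := by
  have hi : i < (l.eraseIdx j).length := by rw [List.length_eraseIdx_of_lt hj]; omega
  rw [List.getD_append _ _ _ _ (hij.trans hj), List.getD_append _ _ _ _ hj,
    List.eraseIdx_append_of_lt_length hj, List.eraseIdx_append_of_lt_length hi,
    ← List.cons_append, ιList_concat]

lemma ιList_bracket_concat_last (l : List V) {i : ℕ} (hi : i < l.length) (w : V) (ω : Ω) :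
    C.ιList (⁅(l ++ [w]).getD i 0, (l ++ [w]).getD l.length 0⁆ ::
        ((l ++ [w]).eraseIdx l.length).eraseIdx i) ω
      = -C.ιList (l.eraseIdx i) (C.ι ⁅w, l.getD i 0⁆ ω) := by
  rw [List.getD_append _ _ _ _ hi, List.getD_append_right _ _ _ _ le_rfl,
    List.eraseIdx_append_of_length_le le_rfl, Nat.sub_self, List.eraseIdx_cons_zero,
    List.append_nil, ← ιList_neg, ← LinearMap.neg_apply, ← map_neg, lie_skew]
  simp [ιList]

lemma pairSum_concat (l : List V) (w : V) (ω : Ω) :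
    C.pairSum (l ++ [w]) ω = -C.ι w (C.pairSum l ω)
      + ∑ i ∈ Finset.range l.length,
          (-1 : ℝ) ^ i • C.ιList (l.eraseIdx i) (C.ι ⁅w, l.getD i 0⁆ ω) := by
  have hold : ∀ j ∈ Finset.range l.length, ∀ i ∈ Finset.range j,
      (-1 : ℝ) ^ (i + j + (l.length + 1)) •
          C.ιList (⁅(l ++ [w]).getD i 0, (l ++ [w]).getD j 0⁆ ::
            ((l ++ [w]).eraseIdx j).eraseIdx i) ω
        = -C.ι w ((-1 : ℝ) ^ (i + j + l.length) •
            C.ιList (⁅l.getD i 0, l.getD j 0⁆ :: (l.eraseIdx j).eraseIdx i) ω) := by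
    intro j hj i hi
    rw [C.ιList_bracket_concat_of_lt (Finset.mem_range.mp hi) (Finset.mem_range.mp hj),
      ← add_assoc, pow_succ, mul_neg_one, neg_smul, map_smul]
  have hnew : ∀ i ∈ Finset.range l.length,
      (-1 : ℝ) ^ (i + l.length + (l.length + 1)) •
          C.ιList (⁅(l ++ [w]).getD i 0, (l ++ [w]).getD l.length 0⁆ ::
            ((l ++ [w]).eraseIdx l.length).eraseIdx i) ω
        = (-1 : ℝ) ^ i • C.ιList (l.eraseIdx i) (C.ι ⁅w, l.getD i 0⁆ ω) := by
    intro i hi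
    rw [C.ιList_bracket_concat_last l (Finset.mem_range.mp hi),
      show i + l.length + (l.length + 1) = i + 2 * l.length + 1 by ring,
      pow_succ, pow_add, pow_mul, neg_one_sq, one_pow, mul_one, mul_neg_one, neg_smul,
      smul_neg, neg_neg]
  rw [pairSum, List.length_append, List.length_singleton, Finset.sum_range_succ,
    Finset.sum_congr rfl hnew, pairSum, map_sum, ← Finset.sum_neg_distrib]
  congr 1
  refine Finset.sum_congr rfl fun j hj => ?_
  rw [map_sum, ← Finset.sum_neg_distrib]
  exact Finset.sum_congr rfl (hold j hj)

theorem d_ιList_eq_pairSum {ω : Ω} (hω : C.d ω = 0) {l : List V}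
    (hl : ∀ v ∈ l, C.lieD v ω = 0) : C.d (C.ιList l ω) = C.pairSum l ω := by
  induction l using List.reverseRecOn with
  | nil => simpa [ιList, pairSum] using hω
  | append_singleton l w ih =>
    rw [ιList_concat, d_ι, lieD_ιList, hl w (by simp), ιList_zero, zero_add,
      ih fun v hv => hl v (List.mem_append_left _ hv), pairSum_concat]
    abel

end CartanModule

/-- List indices are 0-based; shifting `i` and `j` by one each leaves the paper's sign
`(-1)^(i+j+k)` unchanged. -/
theorem d_iterated_contraction_of_hamiltonian_general
    {V : Type*} [LieRing V] [LieAlgebra ℝ V]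
    {Ω : Type*} [AddCommGroup Ω] [Module ℝ Ω]
    (C : CartanModule V Ω) (ω : Ω) (hω : C.d ω = 0)
    (l : List V)
    (hHam : ∀ v ∈ l, ∃ H : Ω, C.ι v ω + C.d H = 0) :
    C.d (C.ιList l ω)
      = ∑ i : Fin l.length, ∑ j : Fin l.length,
          if (i : ℕ) < (j : ℕ) then
            ((-1 : ℝ) ^ ((i : ℕ) + (j : ℕ) + l.length)) •
              C.ιList (⁅l.get i, l.get j⁆ :: ((l.eraseIdx (j : ℕ)).eraseIdx (i : ℕ))) ω
          else 0 := by
  have hget : ∀ i : Fin l.length, l.get i = l.getD i 0 := fun i =>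
    (List.getD_eq_getElem _ _ i.isLt).symm
  simp only [hget]
  exact (C.d_ιList_eq_pairSum hω fun v hv => C.lieD_eq_zero_of_hamiltonian hω (hHam v hv)).trans
    (Fin.sum_sum_ite_lt _ _).symm

/-- Let `ω` be a closed form on a pre-`n`-plectic manifold and let
`v₁, …, v_k` (`k ≥ 1`, encoded as a nonempty list `l`) be Hamiltonian vector fields
for `ω`.  Then
`d ι_{v₁∧⋯∧v_k} ω = ∑_{i<j} (-1)^{i+j+k} ι_{[v_i,v_j] ∧ v₁ ∧ ⋯ v̂_i ⋯ v̂_j ⋯ ∧ v_k} ω`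
(signs 1-based as in the paper; list indices 0-based, so `(-1)^{i+j+k}` becomes
`(-1)^{i₀+j₀+k}`). -/
theorem d_iterated_contraction_of_hamiltonian
    {V : Type*} [LieRing V] [LieAlgebra ℝ V]
    {Ω : Type*} [AddCommGroup Ω] [Module ℝ Ω]
    (C : CartanModule V Ω) (ω : Ω) (hω : C.d ω = 0)
    (l : List V) (hl : l ≠ [])
    (hHam : ∀ v ∈ l, ∃ H : Ω, C.ι v ω + C.d H = 0) :
    C.d (C.ιList l ω)
      = ∑ i : Fin l.length, ∑ j : Fin l.length,
          if (i : ℕ) < (j : ℕ) then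
            ((-1 : ℝ) ^ ((i : ℕ) + (j : ℕ) + l.length)) •
              C.ιList (⁅l.get i, l.get j⁆ :: ((l.eraseIdx (j : ℕ)).eraseIdx (i : ℕ))) ω
          else 0 :=
  d_iterated_contraction_of_hamiltonian_general C ω hω l hHam
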